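/- If the refuter's initial node lies in U^j_i, then i ≤ j; in particular every play following an optimal refuter strategy reaches the error state within j−1 steps and contains at most i faults. -/

import Mathlib

/-- A labelled transition system with state type `S`, label type `L`. -/
structure TS (S L : Type) where
  step : S → L → S → Prop
  init : S

/-- Strong masking simulation between a nominal system `A` (over `Σ = L \ F`)
and an implementation `A'` (over `Σ ∪ F`), where the nominal system is
augmented with masking self-loops (so the mask-move condition B.3 asks for a
state `t` with `s →M t`, i.e. `t = s`, related to `t'`). -/
def IsMaskingSim {S S' L : Type} (A : TS S L) (A' : TS S' L) (F : Set L)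
    (M : S → S' → Prop) : Prop :=
  M A.init A'.init ∧
  ∀ s s', M s s' →
    (∀ e, e ∉ F → ∀ t, A.step s e t → ∃ t', A'.step s' e t' ∧ M t t') ∧
    (∀ e, e ∉ F → ∀ t', A'.step s' e t' → ∃ t, A.step s e t ∧ M t t') ∧
    (∀ f, f ∈ F → ∀ t', A'.step s' f t' → ∃ t, t = s ∧ M t t')

/-- States of the (strong) masking game graph: refuter states `(s, #, s', R)`,
verifier states `(s, σ^i, s', V)` (the `Bool` is `true` for side 1, i.e. a
pending label coming from the nominal system `A`, and `false` for side 2),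
and the error state. -/
inductive GS (S S' L : Type) : Type where
  | R : S → S' → GS S S' L
  | V : S → L → Bool → S' → GS S S' L
  | err : GS S S' L

/-- Basic edges of the masking game graph for nominal `A`, implementation `A'`,
fault labels `F` and masking label `m`. -/
inductive GEdge {S S' L : Type} (A : TS S L) (A' : TS S' L) (F : Set L) (m : L) :
    GS S S' L → L → GS S S' L → Prop where
  | chA {s s' σ t} : σ ∉ F → σ ≠ m → A.step s σ t →
      GEdge A A' F m (.R s s') σ (.V t σ true s')
  | chA' {s s' σ t'} : σ ≠ m → A'.step s' σ t' →
      GEdge A A' F m (.R s s') σ (.V s σ false t')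
  | matchA' {s σ s' t'} : σ ∉ F → σ ≠ m → A'.step s' σ t' →
      GEdge A A' F m (.V s σ true s') σ (.R s t')
  | matchA {s σ s' t} : σ ∉ F → σ ≠ m → A.step s σ t →
      GEdge A A' F m (.V s σ false s') σ (.R t s')
  | mask {s σ s'} : σ ∈ F →
      GEdge A A' F m (.V s σ false s') m (.R s s')

/-- Full edge relation of the masking game graph: basic edges, plus, for any
state with no outgoing basic edge (in particular the error state), edges
labelled by any `σ ∈ Σ` to the error state. -/
def fullEdge {S S' L : Type} (A : TS S L) (A' : TS S' L) (F : Set L) (m : L)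
    (v : GS S S' L) (σ : L) (w : GS S S' L) : Prop :=
  GEdge A A' F m v σ w ∨
    ((∀ l u, ¬ GEdge A A' F m v l u) ∧ σ ∉ F ∧ σ ≠ m ∧ w = GS.err)

/-- `true` on refuter states (including the error state). -/
def isRefB {S S' L : Type} : GS S S' L → Bool
  | .V _ _ _ _ => false
  | _ => true

/-- A verifier node whose pending label is a fault. -/
def isFaultV {S S' L : Type} (F : Set L) : GS S S' L → Prop
  | .V _ σ _ _ => σ ∈ F
  | _ => False

/-- The fault-stratified attractor sets `U^j_i` (first index `j`, second `i`):
`U^0_i = U^j_0 = ∅`, `U^1_1 = {err}`, and `U^{j+2}_{i+1}` collects refuter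
nodes with a successor in `U^{j+1}_{i+1}`, non-fault verifier nodes all of
whose successors are in `∪_{j'≤j+1} U^{j'}_{i+1}` with one in `U^{j+1}_{i+1}`,
and fault verifier nodes all of whose successors are in
`∪_{i'≤i, j'≤j+1} U^{j'}_{i'}` with one in `U^{j+1}_i`. -/
def Uset {α : Type} (post : α → Set α) (isRef isFault : α → Prop) (verr : α) :
    ℕ → ℕ → Set α
  | 0, _ => ∅
  | 1, i => if i = 1 then {verr} else ∅
  | _+2, 0 => ∅
  | j+2, i+1 =>
      {v | isRef v ∧ ∃ w ∈ post v, w ∈ Uset post isRef isFault verr (j+1) (i+1)} ∪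
      {v | ¬ isRef v ∧ ¬ isFault v ∧
            (∀ w ∈ post v, ∃ j' : Fin (j+2), w ∈ Uset post isRef isFault verr j' (i+1)) ∧
            ∃ w ∈ post v, w ∈ Uset post isRef isFault verr (j+1) (i+1)} ∪
      {v | ¬ isRef v ∧ isFault v ∧
            (∀ w ∈ post v, ∃ i' : Fin (i+1), ∃ j' : Fin (j+2),
              w ∈ Uset post isRef isFault verr j' i') ∧
            ∃ w ∈ post v, w ∈ Uset post isRef isFault verr (j+1) i}
  termination_by j _ => j
  decreasing_by all_goals first | exact j'.isLt | omega

/-- The sets `U^j_i` instantiated on the masking game graph of `A`, `A'`. -/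
def UsetG {S S' L : Type} (A : TS S L) (A' : TS S' L) (F : Set L) (m : L) :
    ℕ → ℕ → Set (GS S S' L) :=
  Uset (fun v => {w | ∃ l, fullEdge A A' F m v l w})
    (fun v => isRefB v = true) (isFaultV F) GS.err

/-- History-dependent strategies: given the history and the current state,
choose a label and a next state. -/
abbrev Strat (α L : Type) := List (α × L) → α → L × α

/-- The history (sequence of state/label pairs) of a play up to step `n`. -/
def hist {α L : Type} (ρ : ℕ → α) (σ : ℕ → L) (n : ℕ) : List (α × L) :=
  (List.range n).map fun k => (ρ k, σ k)

/-- `ρ, σ` form an (infinite) play of the graph `E` from `v0`. -/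
def IsPlay {α L : Type} (E : α → L → α → Prop) (v0 : α) (ρ : ℕ → α) (σ : ℕ → L) : Prop :=
  ρ 0 = v0 ∧ ∀ n, E (ρ n) (σ n) (ρ (n+1))

/-- The play `ρ, σ` conforms to the strategy `π` of the player owning the
states where `isRef · = mine`. -/
def Conf {α L : Type} (isRef : α → Bool) (mine : Bool) (π : Strat α L)
    (ρ : ℕ → α) (σ : ℕ → L) : Prop :=
  ∀ n, isRef (ρ n) = mine → (σ n, ρ (n+1)) = π (hist ρ σ n) (ρ n)

/-- Conformance to a memoryless (positional) strategy `f`. -/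
def MemConf {α L : Type} (isRef : α → Bool) (mine : Bool) (f : α → L × α)
    (ρ : ℕ → α) (σ : ℕ → L) : Prop :=
  ∀ n, isRef (ρ n) = mine → (σ n, ρ (n+1)) = f (ρ n)

/-- Auxiliary construction of the outcome of two strategies: history and
current state after `n` steps. -/
def outAux {α L : Type} (isRef : α → Bool) (πR πV : Strat α L) (v0 : α) :
    ℕ → List (α × L) × α
  | 0 => ([], v0)
  | n+1 =>
      let p := outAux isRef πR πV v0 n
      let c := if isRef p.2 then πR p.1 p.2 else πV p.1 p.2
      (p.1 ++ [(p.2, c.1)], c.2)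

/-- State sequence of the outcome `out(πR, πV)`. -/
def outSt {α L : Type} (isRef : α → Bool) (πR πV : Strat α L) (v0 : α) (n : ℕ) : α :=
  (outAux isRef πR πV v0 n).2

/-- Label sequence of the outcome `out(πR, πV)`. -/
def outLb {α L : Type} (isRef : α → Bool) (πR πV : Strat α L) (v0 : α) (n : ℕ) : L :=
  (if isRef (outSt isRef πR πV v0 n)
    then πR (outAux isRef πR πV v0 n).1 (outSt isRef πR πV v0 n)
    else πV (outAux isRef πR πV v0 n).1 (outSt isRef πR πV v0 n)).1

open Classical in
/-- The masking payoff `f_m(ρ) = lim_n pr1(v_n) / (1 + Σ_{i≤n} pr0(v_i))`,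
where `v_n = (χ_F(σ_n), χ_{err}(ρ_{n+1}))`. -/
noncomputable def payoff {α L : Type} (F : Set L) (verr : α)
    (ρ : ℕ → α) (σ : ℕ → L) : ℝ :=
  Filter.limUnder Filter.atTop fun n =>
    (if ρ (n+1) = verr then (1:ℝ) else 0) /
      (1 + ∑ i ∈ Finset.range (n+1), (if σ i ∈ F then (1:ℝ) else 0))

/-- Refuter strategies (valid at refuter nodes). -/
abbrev RStrat {S S' L : Type} (A : TS S L) (A' : TS S' L) (F : Set L) (m : L) :=
  {π : Strat (GS S S' L) L //
    ∀ h v, isRefB v = true → fullEdge A A' F m v (π h v).1 (π h v).2}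

/-- Verifier strategies (valid at verifier nodes). -/
abbrev VStrat {S S' L : Type} (A : TS S L) (A' : TS S' L) (F : Set L) (m : L) :=
  {π : Strat (GS S S' L) L //
    ∀ h v, isRefB v = false → fullEdge A A' F m v (π h v).1 (π h v).2}

/-- The value of the quantitative masking game (the masking distance
`δ_m(A, A')`): sup over refuter strategies of the inf over verifier
strategies of the payoff of the outcome play. -/
noncomputable def maskingValue {S S' L : Type} (A : TS S L) (A' : TS S' L)
    (F : Set L) (m : L) : ℝ :=
  ⨆ πR : RStrat A A' F m, ⨅ πV : VStrat A A' F m,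
    payoff F GS.err
      (outSt isRefB πR.1 πV.1 (GS.R A.init A'.init))
      (outLb isRefB πR.1 πV.1 (GS.R A.init A'.init))

/-! The refuter plays greedily against a budget: after `n` steps with `d` faults it moves, when it
can, into some `U^a_b` with `a + n + 1 ≤ j` and `b + d ≤ i`. Every clause of the definition of
`U` then keeps the current node inside such a set, and since `U^0_b = ∅` and `U^1_b ⊆ {err}`, the
step budget `j` forces the play into the error state before it runs out. -/

lemma Finset.sum_range_succ_eq_sum_range_of_eq_zero {M : Type*} [AddCommMonoid M] {f : ℕ → M}
    {n : ℕ} (h0 : f 0 = 0) (hn : f n = 0) :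
    ∑ k ∈ Finset.range n, f (k + 1) = ∑ k ∈ Finset.range n, f k := by
  simpa [h0, hn] using (Finset.sum_range_succ' f n).symm.trans (Finset.sum_range_succ f n)

lemma Nat.exists_and_of_step_of_bounded {P Q : ℕ → Prop} {N : ℕ} (h0 : P 0)
    (hstep : ∀ n, P n → Q n ∨ P (n + 1)) (hbound : ∀ n, P n → n < N) : ∃ n, P n ∧ Q n := by
  by_contra! hQ
  have hP : ∀ n, P n := fun n => by
    induction n with
    | zero => exact h0
    | succ n ih => exact (hstep n ih).resolve_left (hQ n ih)
  exact lt_irrefl N (hbound N (hP N))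

open Classical

namespace Uset

variable {α : Type} {post : α → Set α} {isRef isFault : α → Prop} {verr v w : α} {j i : ℕ}

lemma pos_of_mem (hv : v ∈ Uset post isRef isFault verr j i) : 0 < j := by
  rcases j with _ | j
  · rw [Uset] at hv
    exact absurd hv (Set.notMem_empty v)
  · exact j.succ_pos

lemma mem_one_iff : v ∈ Uset post isRef isFault verr 1 i ↔ v = verr ∧ i = 1 := by
  rw [Uset]
  split_ifs with hi <;> simp [hi]

lemma exists_mem_post (hv : v ∈ Uset post isRef isFault verr (j + 2) i) (hr : isRef v) :
    ∃ w ∈ post v, w ∈ Uset post isRef isFault verr (j + 1) i := by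
  rcases i with _ | i
  · rw [Uset] at hv
    exact absurd hv (Set.notMem_empty v)
  rw [Uset] at hv
  rcases hv with (⟨-, hw⟩ | ⟨hr', -⟩) | ⟨hr', -⟩
  · exact hw
  all_goals exact absurd hr hr'

lemma mem_of_mem_post (hv : v ∈ Uset post isRef isFault verr (j + 2) i) (hr : ¬ isRef v)
    (hw : w ∈ post v) : ∃ j' i', j' ≤ j + 1 ∧ i' + (if isFault v then 1 else 0) ≤ i ∧
      w ∈ Uset post isRef isFault verr j' i' := by
  rcases i with _ | i
  · rw [Uset] at hv
    exact absurd hv (Set.notMem_empty v)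
  rw [Uset] at hv
  rcases hv with (⟨hr', -⟩ | ⟨-, hf, hall, -⟩) | ⟨-, hf, hall, -⟩
  · exact absurd hr' hr
  · obtain ⟨j', hj'⟩ := hall w hw
    exact ⟨j', i + 1, by omega, by simp [hf], hj'⟩
  · obtain ⟨i', j', hj'⟩ := hall w hw
    exact ⟨j', i', by omega, by simp only [hf, if_true]; omega, hj'⟩

lemma le_of_mem (hv : v ∈ Uset post isRef isFault verr j i) : i ≤ j := by
  induction j using Nat.strong_induction_on generalizing i v with
  | _ j ih =>
  match j, i with
  | 0, _ => exact absurd (pos_of_mem hv) (lt_irrefl 0)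
  | 1, _ => exact (mem_one_iff.mp hv).2.le
  | _ + 2, 0 => omega
  | j + 2, i + 1 =>
    rw [Uset] at hv
    rcases hv with (⟨-, w, -, hw⟩ | ⟨-, -, -, w, -, hw⟩) | ⟨-, -, -, w, -, hw⟩
    · have := ih (j + 1) (by omega) hw; omega
    · have := ih (j + 1) (by omega) hw; omega
    · have := ih (j + 1) (by omega) hw; omega

end Uset

lemma Strat.exists_greedy {α L : Type} {E : α → L → α → Prop}
    (hsucc : ∀ v, ∃ p : L × α, E v p.1 p.2) (P : List (α × L) → α → L × α → Prop) :
    ∃ π : Strat α L, ∀ h v, E v (π h v).1 (π h v).2 ∧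
      ((∃ p : L × α, E v p.1 p.2 ∧ P h v p) → P h v (π h v)) := by
  have hchoice : ∀ h v, ∃ p : L × α, E v p.1 p.2 ∧
      ((∃ p : L × α, E v p.1 p.2 ∧ P h v p) → P h v p) := by
    intro h v
    by_cases hP : ∃ p : L × α, E v p.1 p.2 ∧ P h v p
    · obtain ⟨p, hp, hPp⟩ := hP
      exact ⟨p, hp, fun _ => hPp⟩
    · obtain ⟨p, hp⟩ := hsucc v
      exact ⟨p, hp, fun hP' => absurd hP' hP⟩
  choose π hπ using hchoice
  exact ⟨π, hπ⟩

section Play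

variable {α L : Type} (E : α → L → α → Prop) (isRef : α → Bool) (isFault : α → Prop) (verr : α)

noncomputable def faultCount (ρ : ℕ → α) (n : ℕ) : ℕ :=
  ∑ k ∈ Finset.range n, if isFault (ρ k) then 1 else 0

lemma faultCount_succ (ρ : ℕ → α) (n : ℕ) :
    faultCount isFault ρ (n + 1) = faultCount isFault ρ n + if isFault (ρ n) then 1 else 0 :=
  Finset.sum_range_succ _ _

noncomputable def histFaults (h : List (α × L)) : ℕ :=
  (h.map fun x => if isFault x.1 then 1 else 0).sum

lemma histFaults_hist_append (ρ : ℕ → α) (σ : ℕ → L) (n : ℕ) (v : α) (l : L) :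
    histFaults isFault (hist ρ σ n ++ [(v, l)]) =
      faultCount isFault ρ n + if isFault v then 1 else 0 := by
  induction n generalizing v l with
  | zero => simp [histFaults, hist, faultCount]
  | succ n ih =>
    have hsucc : hist ρ σ (n + 1) = hist ρ σ n ++ [(ρ n, σ n)] := by
      simp [hist, List.range_succ]
    rw [hsucc, histFaults, List.map_append, List.sum_append, ← histFaults, ih,
      faultCount_succ]
    simp

def WithinBudget (j i n d : ℕ) (v : α) : Prop :=
  ∃ a b, a + n ≤ j ∧ b + d ≤ i ∧
    v ∈ Uset (fun v => {w | ∃ l, E v l w}) (fun v => isRef v = true) isFault verr a b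

def KeepsBudget (j i : ℕ) (h : List (α × L)) (v : α) (p : L × α) : Prop :=
  WithinBudget E isRef isFault verr j i (h.length + 1) (histFaults isFault (h ++ [(v, p.1)])) p.2

def IsBudgetGreedy (j i : ℕ) (π : Strat α L) : Prop :=
  ∀ h v, isRef v = true →
    (∃ p : L × α, E v p.1 p.2 ∧ KeepsBudget E isRef isFault verr j i h v p) →
      KeepsBudget E isRef isFault verr j i h v (π h v)

variable {E isRef isFault verr} {j i : ℕ} {π : Strat α L} {v0 : α} {ρ : ℕ → α} {σ : ℕ → L}

lemma withinBudget_succ_or_eq_verr (hfault : ∀ v, isRef v = true → ¬ isFault v)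
    (hπ : IsBudgetGreedy E isRef isFault verr j i π)
    (hplay : IsPlay E v0 ρ σ) (hconf : Conf isRef true π ρ σ) {n : ℕ}
    (hn : WithinBudget E isRef isFault verr j i n (faultCount isFault ρ n) (ρ n)) :
    ρ n = verr ∨
      WithinBudget E isRef isFault verr j i (n + 1) (faultCount isFault ρ (n + 1)) (ρ (n + 1)) := by
  obtain ⟨a, b, ha, hb, hmem⟩ := hn
  obtain _ | _ | a := a
  · exact absurd (Uset.pos_of_mem hmem) (lt_irrefl 0)
  · exact Or.inl (Uset.mem_one_iff.mp hmem).1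
  right
  have hlen : (hist ρ σ n).length = n := by simp [hist]
  by_cases hr : isRef (ρ n) = true
  · obtain ⟨w, ⟨l, hl⟩, hw⟩ := Uset.exists_mem_post hmem hr
    have hmove := hπ (hist ρ σ n) (ρ n) hr ⟨(l, w), hl, a + 1, b, by omega,
      by rw [histFaults_hist_append, if_neg (hfault _ hr)]; omega, hw⟩
    rwa [← hconf n hr, KeepsBudget, hlen, histFaults_hist_append,
      ← faultCount_succ] at hmove
  · obtain ⟨a', b', ha', hb', hw⟩ := Uset.mem_of_mem_post hmem hr ⟨σ n, hplay.2 n⟩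
    exact ⟨a', b', by omega, by rw [faultCount_succ]; omega, hw⟩

theorem exists_eq_verr_of_isBudgetGreedy (hfault : ∀ v, isRef v = true → ¬ isFault v)
    (hπ : IsBudgetGreedy E isRef isFault verr j i π)
    (hplay : IsPlay E v0 ρ σ) (hconf : Conf isRef true π ρ σ)
    (hv0 : v0 ∈ Uset (fun v => {w | ∃ l, E v l w}) (fun v => isRef v = true) isFault verr j i) :
    ∃ n < j, ρ n = verr ∧ faultCount isFault ρ n ≤ i := by
  obtain ⟨n, ⟨a, b, ha, hb, hmem⟩, herr⟩ := Nat.exists_and_of_step_of_bounded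
    (P := fun n => WithinBudget E isRef isFault verr j i n (faultCount isFault ρ n) (ρ n))
    (Q := fun n => ρ n = verr) (N := j)
    ⟨j, i, by omega, by simp [faultCount], hplay.1 ▸ hv0⟩
    (fun n hn => withinBudget_succ_or_eq_verr hfault hπ hplay hconf hn)
    (fun n ⟨a, b, ha, hb, hmem⟩ => by have := Uset.pos_of_mem hmem; omega)
  have := Uset.pos_of_mem hmem
  exact ⟨n, by omega, herr, by omega⟩

end Play

section Game

variable {S S' L : Type} {A : TS S L} {A' : TS S' L} {F : Set L} {m : L}

lemma exists_fullEdge (hne : ∃ σ : L, σ ∉ F ∧ σ ≠ m) (v : GS S S' L) :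
    ∃ p : L × GS S S' L, fullEdge A A' F m v p.1 p.2 := by
  obtain ⟨σ, hσF, hσm⟩ := hne
  by_cases hb : ∃ l u, GEdge A A' F m v l u
  · obtain ⟨l, u, he⟩ := hb
    exact ⟨(l, u), Or.inl he⟩
  · push Not at hb
    exact ⟨(σ, GS.err), Or.inr ⟨hb, hσF, hσm, rfl⟩⟩

lemma mem_iff_isFaultV_of_fullEdge (hm : m ∉ F) {v w : GS S S' L} {l : L}
    (h : fullEdge A A' F m v l w) : l ∈ F ↔ isFaultV F w := by
  rcases h with h | ⟨-, hF, -, rfl⟩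
  · cases h with
    | chA => simp [isFaultV]
    | chA' => simp [isFaultV]
    | matchA' h => simp [isFaultV, h]
    | matchA h => simp [isFaultV, h]
    | mask => simp [isFaultV, hm]
  · simp [isFaultV, hF]

lemma not_isFaultV_of_isRefB {v : GS S S' L} (h : isRefB v = true) : ¬ isFaultV F v := by
  cases v <;> simp_all [isRefB, isFaultV]

end Game

open Classical in
/-- if the refuter's initial node lies in `U^j_i` then `i ≤ j`;
moreover the refuter has a (valid) strategy such that every conforming play
reaches the error state within `j - 1` steps and contains at most `i`
fault-labelled transitions before reaching it. -/
theorem refuter_in_U_bounds {S S' L : Type} (A : TS S L) (A' : TS S' L)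
    (F : Set L) (m : L) (hm : m ∉ F) (hne : ∃ σ : L, σ ∉ F ∧ σ ≠ m)
    (j i : ℕ) (h : GS.R A.init A'.init ∈ UsetG A A' F m j i) :
    i ≤ j ∧
    ∃ π : RStrat A A' F m,
      ∀ ρ σ, IsPlay (fullEdge A A' F m) (GS.R A.init A'.init) ρ σ →
        Conf isRefB true π.1 ρ σ →
        ∃ n ≤ j - 1, ρ n = GS.err ∧
          (∑ k ∈ Finset.range n, (if σ k ∈ F then 1 else 0)) ≤ i := by
  refine ⟨Uset.le_of_mem h, ?_⟩
  obtain ⟨π, hπ⟩ := Strat.exists_greedy (exists_fullEdge hne)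
    (KeepsBudget (fullEdge A A' F m) isRefB (isFaultV F) GS.err j i)
  refine ⟨⟨π, fun hs v _ => (hπ hs v).1⟩, fun ρ σ hplay hconf => ?_⟩
  obtain ⟨n, hnj, herr, hfaults⟩ := exists_eq_verr_of_isBudgetGreedy
    (fun v hv => not_isFaultV_of_isRefB hv) (fun hs v _ => (hπ hs v).2) hplay hconf h
  refine ⟨n, by omega, herr, ?_⟩
  calc (∑ k ∈ Finset.range n, if σ k ∈ F then 1 else 0)
      = ∑ k ∈ Finset.range n, if isFaultV F (ρ (k + 1)) then 1 else 0 :=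
        Finset.sum_congr rfl fun k _ => by
          simp only [mem_iff_isFaultV_of_fullEdge hm (hplay.2 k)]
    _ = ∑ k ∈ Finset.range n, if isFaultV F (ρ k) then 1 else 0 :=
        Finset.sum_range_succ_eq_sum_range_of_eq_zero
          (f := fun k => if isFaultV F (ρ k) then 1 else 0)
          (by simp [hplay.1, isFaultV]) (by simp [herr, isFaultV])
    _ ≤ i := hfaults
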